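/- Let T be a positive self-adjoint element of a unital C*-algebra B. Then the Bochner integral (2/π)∫₀^∞ T(1 + t²T)^{-1} dt converges absolutely and equals √T (the positive square root of T given by continuous functional calculus). -/

import Mathlib

/-!
For `x ≥ 0` the substitution `u = √x t` gives `∫₀^∞ x / (1 + t²x) dt = (π/2) √x`. On the spectrum
of `T`, which lies in `[0, ‖T‖]`, the integrands are dominated by the integrable function
`‖T‖ / (1 + t²‖T‖)` and depend jointly continuously on `(t, x)`, so the continuous functional
calculus commutes with the integral.
-/

open MeasureTheory Set Real

lemma div_one_add_sq_mul_eq_mul_inv {r : ℝ} (hr : 0 ≤ r) (t : ℝ) :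
    r / (1 + t ^ 2 * r) = r * (1 + (√r * t) ^ 2)⁻¹ := by
  rw [mul_pow, Real.sq_sqrt hr, div_eq_mul_inv, mul_comm r (t ^ 2)]

lemma integrable_div_one_add_sq_mul {r : ℝ} (hr : 0 ≤ r) :
    Integrable fun t : ℝ => r / (1 + t ^ 2 * r) := by
  rcases hr.eq_or_lt with rfl | hr
  · simp
  simp_rw [div_one_add_sq_mul_eq_mul_inv hr.le]
  exact (integrable_inv_one_add_sq.comp_mul_left' (Real.sqrt_pos.mpr hr).ne').const_mul r

lemma integral_Ioi_div_one_add_sq_mul {r : ℝ} (hr : 0 ≤ r) :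
    ∫ t in Ioi (0 : ℝ), r / (1 + t ^ 2 * r) = π / 2 * √r := by
  rcases hr.eq_or_lt with rfl | hr
  · simp
  have hsqrt : 0 < √r := Real.sqrt_pos.mpr hr
  simp_rw [div_one_add_sq_mul_eq_mul_inv hr.le]
  rw [integral_comp_mul_left_Ioi (fun u => r * (1 + u ^ 2)⁻¹) 0 hsqrt, mul_zero,
    integral_const_mul, integral_Ioi_inv_one_add_sq, Real.arctan_zero, sub_zero, smul_eq_mul]
  nth_rw 2 [← Real.sq_sqrt hr.le]
  field_simp

lemma div_one_add_mul_le_div_one_add_mul {c x y : ℝ} (hc : 0 ≤ c) (hx : 0 ≤ x) (hxy : x ≤ y) :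
    x / (1 + c * x) ≤ y / (1 + c * y) := by
  have hy : 0 ≤ y := hx.trans hxy
  rw [div_le_div_iff₀ (by positivity) (by positivity)]
  linarith

lemma continuousOn_div_one_add_sq_mul :
    ContinuousOn (Function.uncurry fun (t x : ℝ) => x / (1 + t ^ 2 * x)) (univ ×ˢ Ici 0) := by
  refine ContinuousOn.div (by fun_prop) (by fun_prop) ?_
  rintro ⟨t, x⟩ ⟨-, hx : 0 ≤ x⟩
  positivity

theorem integral_resolvent_eq_sqrt_general {B : Type*} [CStarAlgebra B]
    [PartialOrder B] [StarOrderedRing B]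
    (T : B) (hT : 0 ≤ T) :
    IntegrableOn (fun t : ℝ => cfc (fun x : ℝ => x / (1 + t ^ 2 * x)) T) (Set.Ioi 0) ∧
      (2 / Real.pi) • ∫ t in Set.Ioi (0 : ℝ), cfc (fun x : ℝ => x / (1 + t ^ 2 * x)) T
        = cfc Real.sqrt T := by
  have hspec : spectrum ℝ T ⊆ Icc 0 ‖T‖ := fun x hx =>
    ⟨spectrum_nonneg_of_nonneg hT hx,
      (le_algebraMap_iff_spectrum_le (a := T)).mp IsSelfAdjoint.le_algebraMap_norm_self x hx⟩
  have hcont := continuousOn_div_one_add_sq_mul.mono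
    (prod_mono (subset_univ (Ioi 0)) (hspec.trans Icc_subset_Ici_self))
  have hbound : ∀ᵐ t ∂(volume.restrict (Ioi (0 : ℝ))), ∀ x ∈ spectrum ℝ T,
      ‖x / (1 + t ^ 2 * x)‖ ≤ ‖T‖ / (1 + t ^ 2 * ‖T‖) := .of_forall fun t x hx => by
    obtain ⟨hx0, hxT⟩ := hspec hx
    rw [Real.norm_of_nonneg (by positivity)]
    exact div_one_add_mul_le_div_one_add_mul (by positivity) hx0 hxT
  have hint := (integrable_div_one_add_sq_mul (norm_nonneg T)).restrict (s := Ioi 0)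
  refine ⟨integrableOn_cfc measurableSet_Ioi _ _ T hcont hbound hint.2, ?_⟩
  rw [← cfc_setIntegral measurableSet_Ioi _ _ T hcont hbound hint.2,
    cfc_congr fun x hx => integral_Ioi_div_one_add_sq_mul (hspec hx).1,
    ← cfc_smul (2 / π) (fun x => π / 2 * √x) T]
  refine cfc_congr fun x _ => ?_
  simp only [smul_eq_mul]
  field_simp

/-- Let `T` be a positive self-adjoint element of a unital C⋆-algebra `B`.  Then the
Bochner integral `(2/π)∫₀^∞ T(1 + t²T)⁻¹ dt` converges absolutely and equals `√T`
(the positive square root given by the continuous functional calculus). -/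
theorem integral_resolvent_eq_sqrt {B : Type*} [CStarAlgebra B]
    [PartialOrder B] [StarOrderedRing B]
    (T : B) (hTsa : IsSelfAdjoint T) (hT : 0 ≤ T) :
    IntegrableOn (fun t : ℝ => cfc (fun x : ℝ => x / (1 + t ^ 2 * x)) T) (Set.Ioi 0) ∧
      (2 / Real.pi) • ∫ t in Set.Ioi (0 : ℝ), cfc (fun x : ℝ => x / (1 + t ^ 2 * x)) T
        = cfc Real.sqrt T :=
  integral_resolvent_eq_sqrt_general T hT
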